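/- arXiv:1312.5792 — 2 statements merged into one kernel-verified Lean document; each statement's English description precedes it below -/
import Mathlib

section
/- Let A be a real d×d matrix, C a real c×c matrix, B a real d×c matrix, and h ≥ 0. Then the matrix exponential of h times the block upper-triangular matrix [[A, B], [0, C]] equals the block matrix [[exp(hA), ∫₀ʰ exp(A(h−s)) B exp(Cs) ds], [0, exp(hC)]]. -/
/-!
As functions of `h`, both sides solve the linear equation `F' = M F`, `F 0 = 1`, where
`M = [[A, B], [0, C]]`; by uniqueness of solutions of Lipschitz ODEs they agree. For the
upper-right block, the integral equals `exp (h A) * ∫₀ʰ exp (-s A) B exp (s C) ds`, whose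
derivative is `A` times itself plus `B exp (h C)` by the product rule and the fundamental
theorem of calculus.
-/

open Matrix MeasureTheory intervalIntegral NormedSpace
open scoped Matrix.Norms.L2Operator

theorem eq_exp_smul_of_hasDerivAt {𝔸 : Type*} [NormedRing 𝔸] [NormedAlgebra ℝ 𝔸]
    [CompleteSpace 𝔸] {M : 𝔸} {F : ℝ → 𝔸} (hF : ∀ t, HasDerivAt F (M * F t) t)
    (hF₀ : F 0 = 1) (t : ℝ) : F t = exp (t • M) := by
  have hlip : LipschitzWith ‖ContinuousLinearMap.mul ℝ 𝔸 M‖₊ (M * ·) :=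
    (ContinuousLinearMap.mul ℝ 𝔸 M).lipschitz
  refine congrFun (ODE_solution_unique_univ (v := fun _ x => M * x) (s := fun _ => Set.univ)
    (t₀ := 0) (fun _ => hlip.lipschitzOnWith) (fun t => ⟨hF t, trivial⟩)
    (fun t => ⟨hasDerivAt_exp_smul_const' M t, trivial⟩) ?_) t
  rw [hF₀, zero_smul, exp_zero]

section MatrixCalculus

variable {𝕜 : Type*} [NontriviallyNormedField 𝕜] {l m n o : Type*}

theorem Matrix.hasDerivAt_iff [Fintype n] {F : 𝕜 → Matrix m n 𝕜} {F' : Matrix m n 𝕜} {t : 𝕜} :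
    HasDerivAt F F' t ↔ ∀ i j, HasDerivAt (fun s => F s i j) (F' i j) t :=
  ⟨fun h i j => hasDerivAt_pi.1 (hasDerivAt_pi.1 h i) j,
    fun h => hasDerivAt_pi.2 fun i => hasDerivAt_pi.2 (h i)⟩

theorem HasDerivAt.matrix_mul [Fintype m] [Fintype n] {F : 𝕜 → Matrix l m 𝕜}
    {G : 𝕜 → Matrix m n 𝕜} {F' : Matrix l m 𝕜} {G' : Matrix m n 𝕜} {t : 𝕜}
    (hF : HasDerivAt F F' t) (hG : HasDerivAt G G' t) :
    HasDerivAt (fun s => F s * G s) (F' * G t + F t * G') t := by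
  refine Matrix.hasDerivAt_iff.2 fun i k => ?_
  simp only [Matrix.mul_apply, Matrix.add_apply, ← Finset.sum_add_distrib]
  exact HasDerivAt.fun_sum fun j _ =>
    (Matrix.hasDerivAt_iff.1 hF i j).mul (Matrix.hasDerivAt_iff.1 hG j k)

theorem HasDerivAt.matrix_fromBlocks [Fintype n] [Fintype o] {A : 𝕜 → Matrix l n 𝕜}
    {B : 𝕜 → Matrix l o 𝕜} {C : 𝕜 → Matrix m n 𝕜} {D : 𝕜 → Matrix m o 𝕜}
    {A' : Matrix l n 𝕜} {B' : Matrix l o 𝕜} {C' : Matrix m n 𝕜} {D' : Matrix m o 𝕜} {t : 𝕜}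
    (hA : HasDerivAt A A' t) (hB : HasDerivAt B B' t) (hC : HasDerivAt C C' t)
    (hD : HasDerivAt D D' t) :
    HasDerivAt (fun s => fromBlocks (A s) (B s) (C s) (D s)) (fromBlocks A' B' C' D') t := by
  refine Matrix.hasDerivAt_iff.2 fun i j => ?_
  rcases i with i | i <;> rcases j with j | j
  · exact Matrix.hasDerivAt_iff.1 hA i j
  · exact Matrix.hasDerivAt_iff.1 hB i j
  · exact Matrix.hasDerivAt_iff.1 hC i j
  · exact Matrix.hasDerivAt_iff.1 hD i j

end MatrixCalculus

theorem Matrix.intervalIntegral_const_mul {l m n : Type*} [Fintype l] [Fintype m] [Fintype n]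
    [DecidableEq l] [DecidableEq n] (X : Matrix l m ℝ) {f : ℝ → Matrix m n ℝ} {a b : ℝ}
    (hf : IntervalIntegrable f volume a b) :
    ∫ s in a..b, X * f s = X * ∫ s in a..b, f s :=
  (LinearMap.toContinuousLinearMap (mulLeftLinearMap n ℝ X)).intervalIntegral_comp_comm hf

section VanLoan

variable {m n : Type*} [Fintype m] [DecidableEq m] [Fintype n] [DecidableEq n]

theorem Matrix.exp_add_smul (a b : ℝ) (A : Matrix m m ℝ) :
    exp ((a + b) • A) = exp (a • A) * exp (b • A) := by
  rw [add_smul]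
  exact Matrix.exp_add_of_commute _ _ (((Commute.refl A).smul_left a).smul_right b)

theorem Matrix.continuous_exp_smul (A : Matrix m m ℝ) : Continuous fun t : ℝ => exp (t • A) :=
  continuous_iff_continuousAt.2 fun t => (hasDerivAt_exp_smul_const' A t).continuousAt

variable (A : Matrix m m ℝ) (B : Matrix m n ℝ) (C : Matrix n n ℝ)

theorem continuous_exp_neg_smul_mul_mul_exp_smul :
    Continuous fun s : ℝ => exp ((-s) • A) * B * exp (s • C) :=
  (((Matrix.continuous_exp_smul A).comp continuous_neg).matrix_mul continuous_const).matrix_mul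
    (Matrix.continuous_exp_smul C)

theorem integral_exp_mul_exp_eq_exp_mul_integral (t : ℝ) :
    ∫ s in (0 : ℝ)..t, exp ((t - s) • A) * B * exp (s • C) =
      exp (t • A) * ∫ s in (0 : ℝ)..t, exp ((-s) • A) * B * exp (s • C) := by
  rw [← Matrix.intervalIntegral_const_mul _
    ((continuous_exp_neg_smul_mul_mul_exp_smul A B C).intervalIntegrable _ _)]
  refine integral_congr fun s _ => ?_
  simp only [sub_eq_add_neg, Matrix.exp_add_smul, Matrix.mul_assoc]

theorem hasDerivAt_integral_exp_mul_exp (t : ℝ) :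
    HasDerivAt (fun t => ∫ s in (0 : ℝ)..t, exp ((t - s) • A) * B * exp (s • C))
      (A * (∫ s in (0 : ℝ)..t, exp ((t - s) • A) * B * exp (s • C)) + B * exp (t • C)) t := by
  have hcont := continuous_exp_neg_smul_mul_mul_exp_smul A B C
  have hV := integral_hasDerivAt_right (hcont.intervalIntegrable 0 t)
    hcont.stronglyMeasurable.stronglyMeasurableAtFilter hcont.continuousAt
  simp only [integral_exp_mul_exp_eq_exp_mul_integral]
  convert (hasDerivAt_exp_smul_const' A t).matrix_mul hV using 1
  rw [← Matrix.mul_assoc, ← Matrix.mul_assoc, ← Matrix.mul_assoc, ← Matrix.exp_add_smul]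
  simp

theorem hasDerivAt_fromBlocks_exp_integral (t : ℝ) :
    HasDerivAt (fun t => fromBlocks (exp (t • A))
        (∫ s in (0 : ℝ)..t, exp ((t - s) • A) * B * exp (s • C)) 0 (exp (t • C)))
      (fromBlocks A B 0 C * fromBlocks (exp (t • A))
        (∫ s in (0 : ℝ)..t, exp ((t - s) • A) * B * exp (s • C)) 0 (exp (t • C))) t := by
  convert (hasDerivAt_exp_smul_const' A t).matrix_fromBlocks
    (hasDerivAt_integral_exp_mul_exp A B C t) (hasDerivAt_const t 0)
    (hasDerivAt_exp_smul_const' C t) using 1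
  simp [fromBlocks_multiply]

end VanLoan

theorem van_loan_block_exponential_general (d c : ℕ)
    (A : Matrix (Fin d) (Fin d) ℝ) (C : Matrix (Fin c) (Fin c) ℝ)
    (B : Matrix (Fin d) (Fin c) ℝ) (h : ℝ) :
    NormedSpace.exp (h • Matrix.fromBlocks A B 0 C) =
      Matrix.fromBlocks
        (NormedSpace.exp (h • A))
        (∫ s in (0:ℝ)..h,
          NormedSpace.exp ((h - s) • A) * B * NormedSpace.exp (s • C))
        0
        (NormedSpace.exp (h • C)) := by
  refine (eq_exp_smul_of_hasDerivAt (hasDerivAt_fromBlocks_exp_integral A B C) ?_ h).symm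
  simp [fromBlocks_one]

/-- **Van Loan block-exponential identity.**  For a real `d × d` matrix `A`, a real `c × c`
matrix `C`, a real `d × c` matrix `B` and `h ≥ 0`, the matrix exponential of `h` times the
block upper-triangular matrix `[[A, B], [0, C]]` equals the block matrix
`[[exp (h A), ∫₀ʰ exp (A (h − s)) B exp (C s) ds], [0, exp (h C)]]`. -/
theorem van_loan_block_exponential (d c : ℕ)
    (A : Matrix (Fin d) (Fin d) ℝ) (C : Matrix (Fin c) (Fin c) ℝ)
    (B : Matrix (Fin d) (Fin c) ℝ) (h : ℝ) (hh : 0 ≤ h) :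
    NormedSpace.exp (h • Matrix.fromBlocks A B 0 C) =
      Matrix.fromBlocks
        (NormedSpace.exp (h • A))
        (∫ s in (0:ℝ)..h,
          NormedSpace.exp ((h - s) • A) * B * NormedSpace.exp (s • C))
        0
        (NormedSpace.exp (h • C)) :=
  van_loan_block_exponential_general d c A C B h
end

section
/- Let K, M, L > 0, β ≥ 1 a natural number, A a real d×d matrix with ‖A‖ ≤ K, h ≥ 0, and let G, G̃ : [0,h] → M_{d×m}(ℝ) be continuous with ‖G(s)‖ ≤ M, ‖G̃(s)‖ ≤ M, and ‖G(s) − G̃(s)‖ ≤ L s^β for all s ∈ [0,h]. Then ‖∫₀ʰ exp(A(h−s)) (G(s)G(s)ᵀ − G̃(s)G̃(s)ᵀ) exp(Aᵀ(h−s)) ds‖ ≤ 2 M L e^{2Kh} h^{β+1}. -/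
open Matrix MeasureTheory intervalIntegral
open scoped Matrix.Norms.L2Operator

/-! Writing `G Gᵀ - G̃ G̃ᵀ = G (G - G̃)ᵀ + (G - G̃) G̃ᵀ` bounds the middle factor by
`2 M L s^β`, and each exponential factor has norm at most `e^{‖A‖ (h - s)} ≤ e^{K h}`.
The integrand is therefore bounded by `2 M L e^{2 K h} h^β` on an interval of length `h`. -/

theorem norm_pow_le_of_norm_one_le {R : Type*} [SeminormedRing R] (h1 : ‖(1 : R)‖ ≤ 1)
    (a : R) : ∀ n : ℕ, ‖a ^ n‖ ≤ ‖a‖ ^ n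
  | 0 => by simpa using h1
  | n + 1 => norm_pow_le' a n.succ_pos

theorem CStarRing.norm_one_le {E : Type*} [NormedRing E] [StarRing E] [CStarRing E] :
    ‖(1 : E)‖ ≤ 1 := by
  cases subsingleton_or_nontrivial E
  · simp [Subsingleton.elim (1 : E) 0]
  · exact CStarRing.norm_one.le

-- `‖1‖ ≤ 1` rather than `NormOneClass`, so that the zero ring (`0 × 0` matrices) is covered.
theorem NormedSpace.norm_exp_le_of_norm_one_le {𝔸 : Type*} [NormedRing 𝔸]
    [NormedAlgebra ℝ 𝔸] (h1 : ‖(1 : 𝔸)‖ ≤ 1) (x : 𝔸) : ‖NormedSpace.exp x‖ ≤ Real.exp ‖x‖ := by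
  rw [NormedSpace.exp_eq_tsum ℝ, Real.exp_eq_exp_ℝ]
  refine tsum_of_norm_bounded (NormedSpace.expSeries_div_hasSum_exp ‖x‖) fun n => ?_
  rw [norm_smul, norm_inv, Real.norm_natCast, div_eq_inv_mul]
  exact mul_le_mul_of_nonneg_left (norm_pow_le_of_norm_one_le h1 x n) (by positivity)

namespace Matrix

variable {m n : Type*} [Fintype m] [Fintype n] [DecidableEq m] [DecidableEq n]

theorem l2_opNorm_transpose (P : Matrix m n ℝ) : ‖Pᵀ‖ = ‖P‖ := by
  rw [← conjTranspose_eq_transpose_of_trivial, l2_opNorm_conjTranspose]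

theorem l2_opNorm_mul_transpose_sub_mul_transpose_le (P Q : Matrix m n ℝ) :
    ‖P * Pᵀ - Q * Qᵀ‖ ≤ (‖P‖ + ‖Q‖) * ‖P - Q‖ := by
  have hsplit : P * Pᵀ - Q * Qᵀ = P * (P - Q)ᵀ + (P - Q) * Qᵀ := by
    rw [transpose_sub, Matrix.mul_sub, Matrix.sub_mul]
    abel
  calc ‖P * Pᵀ - Q * Qᵀ‖ ≤ ‖P‖ * ‖(P - Q)ᵀ‖ + ‖P - Q‖ * ‖Qᵀ‖ := by
        rw [hsplit]
        exact (norm_add_le _ _).trans (add_le_add (l2_opNorm_mul _ _) (l2_opNorm_mul _ _))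
    _ = (‖P‖ + ‖Q‖) * ‖P - Q‖ := by
        rw [l2_opNorm_transpose, l2_opNorm_transpose]; ring

theorem l2_opNorm_exp_le (A : Matrix n n ℝ) : ‖NormedSpace.exp A‖ ≤ Real.exp ‖A‖ :=
  NormedSpace.norm_exp_le_of_norm_one_le CStarRing.norm_one_le A

theorem l2_opNorm_exp_smul_mul_mul_exp_smul_transpose_le (t : ℝ) (A X : Matrix n n ℝ) :
    ‖NormedSpace.exp (t • A) * X * NormedSpace.exp (t • Aᵀ)‖ ≤
      Real.exp (2 * |t| * ‖A‖) * ‖X‖ := by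
  have hexp : ∀ B : Matrix n n ℝ, ‖B‖ = ‖A‖ →
      ‖NormedSpace.exp (t • B)‖ ≤ Real.exp (|t| * ‖A‖) :=
    fun B hB => by simpa [norm_smul, hB] using l2_opNorm_exp_le (t • B)
  calc _ ≤ ‖NormedSpace.exp (t • A)‖ * ‖X‖ * ‖NormedSpace.exp (t • Aᵀ)‖ := norm_mul₃_le
    _ ≤ Real.exp (|t| * ‖A‖) * ‖X‖ * Real.exp (|t| * ‖A‖) := by
        gcongr
        exacts [hexp A rfl, hexp Aᵀ (l2_opNorm_transpose A)]
    _ = Real.exp (2 * |t| * ‖A‖) * ‖X‖ := by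
        rw [mul_right_comm, ← Real.exp_add]; ring_nf

end Matrix

theorem taylor_truncation_covariance_error_general (d m : ℕ) (K M L : ℝ)
    (hM : 0 < M) (hL : 0 < L) (β : ℕ)
    (A : Matrix (Fin d) (Fin d) ℝ) (hA : ‖A‖ ≤ K) (h : ℝ) (hh : 0 ≤ h)
    (G Gt : ℝ → Matrix (Fin d) (Fin m) ℝ)
    (hGb : ∀ s ∈ Set.Icc (0:ℝ) h, ‖G s‖ ≤ M)
    (hGtb : ∀ s ∈ Set.Icc (0:ℝ) h, ‖Gt s‖ ≤ M)
    (hdiff : ∀ s ∈ Set.Icc (0:ℝ) h, ‖G s - Gt s‖ ≤ L * s ^ β) :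
    ‖∫ s in (0:ℝ)..h,
        NormedSpace.exp ((h - s) • A) * (G s * (G s)ᵀ - Gt s * (Gt s)ᵀ) *
          NormedSpace.exp ((h - s) • Aᵀ)‖ ≤
      2 * M * L * Real.exp (2 * K * h) * h ^ (β + 1) := by
  have hbound : ∀ s ∈ Set.uIoc 0 h,
      ‖NormedSpace.exp ((h - s) • A) * (G s * (G s)ᵀ - Gt s * (Gt s)ᵀ) *
          NormedSpace.exp ((h - s) • Aᵀ)‖ ≤ 2 * M * L * Real.exp (2 * K * h) * h ^ β := by
    intro s hs
    rw [Set.uIoc_of_le hh] at hs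
    have hsIcc : s ∈ Set.Icc 0 h := Set.Ioc_subset_Icc_self hs
    have habs : |h - s| ≤ h := by rw [abs_of_nonneg (by linarith [hs.2])]; linarith [hs.1]
    have hdiff' : ‖G s - Gt s‖ ≤ L * h ^ β :=
      (hdiff s hsIcc).trans (by gcongr; exacts [hsIcc.1, hsIcc.2])
    calc _ ≤ Real.exp (2 * |h - s| * ‖A‖) * ‖G s * (G s)ᵀ - Gt s * (Gt s)ᵀ‖ :=
          l2_opNorm_exp_smul_mul_mul_exp_smul_transpose_le _ _ _
      _ ≤ Real.exp (2 * h * K) * ((M + M) * (L * h ^ β)) := by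
          gcongr
          refine (l2_opNorm_mul_transpose_sub_mul_transpose_le _ _).trans ?_
          gcongr
          exacts [hGb s hsIcc, hGtb s hsIcc]
      _ = 2 * M * L * Real.exp (2 * K * h) * h ^ β := by ring_nf
  calc _ ≤ 2 * M * L * Real.exp (2 * K * h) * h ^ β * |h - 0| :=
        norm_integral_le_of_norm_le_const hbound
    _ = 2 * M * L * Real.exp (2 * K * h) * h ^ (β + 1) := by
        rw [sub_zero, abs_of_nonneg hh, pow_succ]; ring

/-- Estimate for the covariance error caused by replacing the diffusion coefficient `G` by its
truncated Taylor polynomial `G̃`: if `‖A‖ ≤ K`, `‖G(s)‖, ‖G̃(s)‖ ≤ M` and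
`‖G(s) − G̃(s)‖ ≤ L s^β` on `[0, h]`, then
`‖∫₀ʰ exp (A(h−s)) (G Gᵀ − G̃ G̃ᵀ)(s) exp (Aᵀ(h−s)) ds‖ ≤ 2 M L e^{2Kh} h^{β+1}`. -/
theorem taylor_truncation_covariance_error (d m : ℕ) (K M L : ℝ)
    (hK : 0 < K) (hM : 0 < M) (hL : 0 < L) (β : ℕ) (hβ : 1 ≤ β)
    (A : Matrix (Fin d) (Fin d) ℝ) (hA : ‖A‖ ≤ K) (h : ℝ) (hh : 0 ≤ h)
    (G Gt : ℝ → Matrix (Fin d) (Fin m) ℝ)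
    (hGc : ContinuousOn G (Set.Icc 0 h)) (hGtc : ContinuousOn Gt (Set.Icc 0 h))
    (hGb : ∀ s ∈ Set.Icc (0:ℝ) h, ‖G s‖ ≤ M)
    (hGtb : ∀ s ∈ Set.Icc (0:ℝ) h, ‖Gt s‖ ≤ M)
    (hdiff : ∀ s ∈ Set.Icc (0:ℝ) h, ‖G s - Gt s‖ ≤ L * s ^ β) :
    ‖∫ s in (0:ℝ)..h,
        NormedSpace.exp ((h - s) • A) * (G s * (G s)ᵀ - Gt s * (Gt s)ᵀ) *
          NormedSpace.exp ((h - s) • Aᵀ)‖ ≤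
      2 * M * L * Real.exp (2 * K * h) * h ^ (β + 1) :=
  taylor_truncation_covariance_error_general d m K M L hM hL β A hA h hh G Gt hGb hGtb hdiff
end
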